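/- arXiv:2303.07037 — 4 statements merged into one kernel-verified Lean document; each statement's English description precedes it below -/
import Mathlib

section
/- If x is a ∇-point of the unit ball of a Banach space X, then either x is a Daugavet point or x is a strongly exposed point of B_X. -/
open scoped ENNReal

variable {X : Type*} [NormedAddCommGroup X] [NormedSpace ℝ X]

/-- The ballSlice of the closed unit ball of `X` determined by the functional `f` and `α`:
`S(f, α) = {y ∈ B_X : f y > 1 - α}`. -/
def ballSlice (f : X →L[ℝ] ℝ) (α : ℝ) : Set X := {y | ‖y‖ ≤ 1 ∧ 1 - α < f y}

/-- `x` is a Daugavet point: `sup_{y ∈ S} ‖x - y‖ = 2` for every ballSlice `S` of `B_X`. -/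
def IsDaugavetPoint (x : X) : Prop :=
  ‖x‖ = 1 ∧ ∀ (f : X →L[ℝ] ℝ) (α : ℝ), ‖f‖ = 1 → 0 < α →
    ∀ ε > (0 : ℝ), ∃ y ∈ ballSlice f α, 2 - ε < ‖x - y‖

/-- `x` is a `∇`-point: `sup_{y ∈ S} ‖x - y‖ = 2` for every ballSlice `S` of `B_X`
not containing `x`. -/
def IsNablaPoint (x : X) : Prop :=
  ‖x‖ = 1 ∧ ∀ (f : X →L[ℝ] ℝ) (α : ℝ), ‖f‖ = 1 → 0 < α → x ∉ ballSlice f α →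
    ∀ ε > (0 : ℝ), ∃ y ∈ ballSlice f α, 2 - ε < ‖x - y‖

/-- `x` is a `𝔇`-point: `sup_{y ∈ S(f,α)} ‖x - y‖ = 2` for every norm-one functional `f`
supporting `x` (i.e. `f x = 1`) and every `α > 0`. -/
def IsDPoint (x : X) : Prop :=
  ‖x‖ = 1 ∧ ∀ (f : X →L[ℝ] ℝ) (α : ℝ), ‖f‖ = 1 → f x = 1 → 0 < α →
    ∀ ε > (0 : ℝ), ∃ y ∈ ballSlice f α, 2 - ε < ‖x - y‖

/-- `x` is a denting point of `B_X`: it belongs to slices of arbitrarily small diameter. -/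
def IsDentingPoint (x : X) : Prop :=
  ‖x‖ ≤ 1 ∧ ∀ ε > (0 : ℝ), ∃ (f : X →L[ℝ] ℝ) (α : ℝ), ‖f‖ = 1 ∧ 0 < α ∧
    x ∈ ballSlice f α ∧ ∀ y ∈ ballSlice f α, ∀ z ∈ ballSlice f α, ‖y - z‖ < ε

/-- `x` is a strongly exposed point of `B_X`: some norm-one functional `f` with `f x = 1`
generates slices containing `x` of arbitrarily small diameter. -/
def IsStronglyExposedPoint (x : X) : Prop :=
  ‖x‖ = 1 ∧ ∃ f : X →L[ℝ] ℝ, ‖f‖ = 1 ∧ f x = 1 ∧ ∀ ε > (0 : ℝ), ∃ α > (0 : ℝ),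
    ∀ y ∈ ballSlice f α, ∀ z ∈ ballSlice f α, ‖y - z‖ < ε


/-! If `x` is not a Daugavet point, some slice `S(f, α)` stays within `2 - ε` of `x`. Slices
missing `x` do reach the points of `B_X` at distance `> 2 - ε` from `x`, so `f x = 1` and, by
Hahn–Banach, `B_X` is the closed convex hull of `x` and those far points. On the far points
`f ≤ 1 - α`, so the closed convex condition `‖y - x‖ ≤ (2 / α) (1 - f y)` holds on the generators,
hence on all of `B_X`, and it says precisely that `f` strongly exposes `x`. -/

theorem ballSlice_mono {f : X →L[ℝ] ℝ} {α β : ℝ} (h : α ≤ β) : ballSlice f α ⊆ ballSlice f β :=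
  fun _ hy => ⟨hy.1, by linarith [hy.2]⟩

theorem ContinuousLinearMap.apply_le_norm_of_norm_le_one (f : X →L[ℝ] ℝ) {y : X}
    (hy : ‖y‖ ≤ 1) : f y ≤ ‖f‖ :=
  (le_abs_self _).trans <| by simpa using f.le_opNorm_of_le hy

def farPoints (x : X) (ε : ℝ) : Set X := {y | ‖y‖ ≤ 1 ∧ 2 - ε < ‖x - y‖}

theorem convex_setOf_norm_sub_le_mul (x : X) (f : X →L[ℝ] ℝ) (C : ℝ) :
    Convex ℝ {z | ‖z - x‖ ≤ C * (1 - f z)} := by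
  have h := ((convexOn_univ_norm (E := X)).translate_right (-x)).add
    ((C • f).toLinearMap.convexOn convex_univ)
  convert h.convex_le C using 1
  ext z
  simp only [Set.mem_ofPred_eq, neg_add_eq_sub, Set.preimage_univ, Set.mem_univ,
    ContinuousLinearMap.toLinearMap_smul, LinearMap.coe_smul, ContinuousLinearMap.coe_coe,
    Pi.add_apply, Function.comp_apply, Pi.smul_apply, smul_eq_mul, true_and]
  rw [mul_one_sub, le_sub_iff_add_le]

theorem isClosed_setOf_norm_sub_le_mul (x : X) (f : X →L[ℝ] ℝ) (C : ℝ) :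
    IsClosed {z | ‖z - x‖ ≤ C * (1 - f z)} :=
  isClosed_le (by fun_prop) (by fun_prop)

namespace IsNablaPoint

variable {x : X} {ε : ℝ}

theorem exists_mem_farPoints_lt_apply (hx : IsNablaPoint x) {g : X →L[ℝ] ℝ} {c : ℝ}
    (hxc : g x ≤ c) {p : X} (hp : ‖p‖ ≤ 1) (hcp : c < g p) (hε : 0 < ε) :
    ∃ y ∈ farPoints x ε, c < g y := by
  have hg : g ≠ 0 := by
    rintro rfl
    exact (hxc.trans_lt hcp).ne rfl
  have hg₀ : 0 < ‖g‖ := norm_pos_iff.2 hg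
  have hslice : ∀ y, y ∈ ballSlice (‖g‖⁻¹ • g) (1 - c / ‖g‖) ↔ ‖y‖ ≤ 1 ∧ c < g y := by
    intro y
    simp [ballSlice, div_eq_inv_mul, mul_lt_mul_iff_right₀ (inv_pos.2 hg₀)]
  have hc : c / ‖g‖ < 1 := (div_lt_one hg₀).2 (hcp.trans_le (g.apply_le_norm_of_norm_le_one hp))
  obtain ⟨y, hy, hfar⟩ := hx.2 _ _ (norm_smul_inv_norm hg) (sub_pos.2 hc)
    (fun h => ((hslice x).1 h).2.not_ge hxc) ε hε
  exact ⟨y, ⟨hy.1, hfar⟩, ((hslice y).1 hy).2⟩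

theorem mem_closure_convexHull_insert_farPoints (hx : IsNablaPoint x) (hε : 0 < ε) {p : X}
    (hp : ‖p‖ ≤ 1) : p ∈ closure (convexHull ℝ (insert x (farPoints x ε))) := by
  by_contra hpE
  obtain ⟨g, c, hgc, hcg⟩ := geometric_hahn_banach_closed_point
    (convex_convexHull ℝ _).closure isClosed_closure hpE
  have hsub : insert x (farPoints x ε) ⊆ closure (convexHull ℝ (insert x (farPoints x ε))) :=
    (subset_convexHull ℝ _).trans subset_closure
  obtain ⟨y, hy, hcy⟩ := hx.exists_mem_farPoints_lt_apply
    (hgc x (hsub (Set.mem_insert _ _))).le hp hcg hε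
  exact (hgc y (hsub (Set.mem_insert_of_mem _ hy))).not_gt hcy

variable {f : X →L[ℝ] ℝ} {α : ℝ}

theorem apply_eq_one (hx : IsNablaPoint x) (hf : ‖f‖ = 1) (hα : 0 < α) (hε : 0 < ε)
    (hfar : ∀ y ∈ ballSlice f α, ‖x - y‖ ≤ 2 - ε) : f x = 1 := by
  have hle : f x ≤ 1 := hf ▸ f.apply_le_norm_of_norm_le_one hx.1.le
  by_contra hne
  have hβ : 0 < min α (1 - f x) := lt_min hα (sub_pos.2 (hle.lt_of_ne hne))
  have hxβ : x ∉ ballSlice f (min α (1 - f x)) := fun h => by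
    linarith [h.2, min_le_right α (1 - f x)]
  obtain ⟨y, hy, hxy⟩ := hx.2 f _ hf hβ hxβ ε hε
  linarith [hfar y (ballSlice_mono (min_le_left _ _) hy)]

theorem norm_sub_le_mul_one_sub_apply (hx : IsNablaPoint x) (hf : ‖f‖ = 1) (hα : 0 < α)
    (hε : 0 < ε) (hfar : ∀ y ∈ ballSlice f α, ‖x - y‖ ≤ 2 - ε) {y : X} (hy : ‖y‖ ≤ 1) :
    ‖y - x‖ ≤ 2 / α * (1 - f y) := by
  have hfx := hx.apply_eq_one hf hα hε hfar
  refine closure_minimal (convexHull_min ?_ (convex_setOf_norm_sub_le_mul x f _))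
    (isClosed_setOf_norm_sub_le_mul x f _) (hx.mem_closure_convexHull_insert_farPoints hε hy)
  rintro d (rfl | ⟨hd, hxd⟩)
  · simp [hfx]
  · have hfd : f d ≤ 1 - α := not_lt.1 fun h => (hfar d ⟨hd, h⟩).not_gt hxd
    calc ‖d - x‖ ≤ ‖d‖ + ‖x‖ := norm_sub_le _ _
      _ ≤ 2 := by linarith [hx.1]
      _ = 2 / α * α := by field_simp
      _ ≤ 2 / α * (1 - f d) := by gcongr; linarith

end IsNablaPoint

theorem isStronglyExposedPoint_of_norm_sub_le_mul {x : X} (hx : ‖x‖ = 1) {f : X →L[ℝ] ℝ}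
    (hf : ‖f‖ = 1) (hfx : f x = 1) {C : ℝ} (hC : 0 < C)
    (h : ∀ y : X, ‖y‖ ≤ 1 → ‖y - x‖ ≤ C * (1 - f y)) : IsStronglyExposedPoint x := by
  refine ⟨hx, f, hf, hfx, fun ε hε => ⟨ε / (2 * C), by positivity, fun y hy z hz => ?_⟩⟩
  have hclose : ∀ w ∈ ballSlice f (ε / (2 * C)), ‖w - x‖ < ε / 2 := fun w hw =>
    calc ‖w - x‖ ≤ C * (1 - f w) := h w hw.1
      _ < C * (ε / (2 * C)) := by gcongr; linarith [hw.2]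
      _ = ε / 2 := by field_simp
  calc ‖y - z‖ ≤ ‖y - x‖ + ‖x - z‖ := norm_sub_le_norm_sub_add_norm_sub ..
    _ < ε := by rw [norm_sub_rev x z]; linarith [hclose y hy, hclose z hz]

theorem IsNablaPoint.isDaugavetPoint_or_isStronglyExposedPoint_general
    {X : Type*} [NormedAddCommGroup X] [NormedSpace ℝ X]
    {x : X} (hx : IsNablaPoint x) :
    IsDaugavetPoint x ∨ IsStronglyExposedPoint x := by
  refine or_iff_not_imp_left.2 fun hD => ?_
  obtain ⟨f, α, hf, hα, ε, hε, hfar⟩ : ∃ (f : X →L[ℝ] ℝ) (α : ℝ), ‖f‖ = 1 ∧ 0 < α ∧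
      ∃ ε > 0, ∀ y ∈ ballSlice f α, ‖x - y‖ ≤ 2 - ε := by
    simpa [IsDaugavetPoint, hx.1] using hD
  exact isStronglyExposedPoint_of_norm_sub_le_mul hx.1 hf (hx.apply_eq_one hf hα hε hfar)
    (div_pos two_pos hα) fun y hy => hx.norm_sub_le_mul_one_sub_apply hf hα hε hfar hy

/-- A `∇`-point is either a Daugavet point or a strongly exposed point of the unit ball. -/
theorem IsNablaPoint.isDaugavetPoint_or_isStronglyExposedPoint
    {X : Type*} [NormedAddCommGroup X] [NormedSpace ℝ X] [CompleteSpace X]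
    {x : X} (hx : IsNablaPoint x) :
    IsDaugavetPoint x ∨ IsStronglyExposedPoint x :=
  IsNablaPoint.isDaugavetPoint_or_isStronglyExposedPoint_general hx
end

section
/- In a Banach space X with the Radon–Nikodým property, a point x ∈ S_X is a ∇-point if and only if ‖x - y‖ = 2 for every denting point y of B_X with y ≠ x. -/
open scoped ENNReal

variable {X : Type*} [NormedAddCommGroup X] [NormedSpace ℝ X]

/-
A denting point `y ≠ x` lies in slices of arbitrarily small diameter that miss `x`; a `∇`-point
sees points at distance almost `2` in each of them, so `‖x - y‖ = 2`. Conversely, under the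
Radon–Nikodým property every slice missing `x` contains a denting point `y`, necessarily `≠ x`,
and `‖x - y‖ = 2` is then attained inside the slice.
-/

theorem IsDentingPoint.exists_ballSlice_notMem {x y : X} (hy : IsDentingPoint y) (hyx : y ≠ x)
    {ε : ℝ} (hε : 0 < ε) :
    ∃ (f : X →L[ℝ] ℝ) (α : ℝ), ‖f‖ = 1 ∧ 0 < α ∧ y ∈ ballSlice f α ∧ x ∉ ballSlice f α ∧
      ∀ z ∈ ballSlice f α, ‖z - y‖ < ε := by
  have hxy : 0 < ‖x - y‖ := norm_pos_iff.2 (sub_ne_zero.2 hyx.symm)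
  obtain ⟨f, α, hf, hα, hyS, hdiam⟩ := hy.2 (min ε ‖x - y‖) (lt_min hε hxy)
  refine ⟨f, α, hf, hα, hyS, fun hxS => ?_, fun z hz => ?_⟩
  · exact (hdiam x hxS y hyS).not_ge (min_le_right _ _)
  · exact (hdiam z hz y hyS).trans_le (min_le_left _ _)

theorem IsNablaPoint.norm_sub_eq_two {x y : X} (hx : IsNablaPoint x) (hy : IsDentingPoint y)
    (hyx : y ≠ x) : ‖x - y‖ = 2 := by
  refine le_antisymm ?_ (le_of_forall_pos_lt_add fun ε hε => ?_)
  · calc ‖x - y‖ ≤ ‖x‖ + ‖y‖ := norm_sub_le x y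
      _ ≤ 2 := by linarith [hx.1, hy.1]
  obtain ⟨f, α, hf, hα, -, hxS, hsmall⟩ := hy.exists_ballSlice_notMem hyx (half_pos hε)
  obtain ⟨z, hzS, hxz⟩ := hx.2 f α hf hα hxS (ε / 2) (half_pos hε)
  have hzy := hsmall z hzS
  calc 2 < ‖x - z‖ + ε / 2 := by linarith
    _ ≤ ‖x - y‖ + ‖z - y‖ + ε / 2 := by
        gcongr
        simpa only [sub_sub_sub_cancel_right, norm_sub_rev z y] using norm_sub_le (x - y) (z - y)
    _ < ‖x - y‖ + ε := by linarith

theorem isNablaPoint_of_norm_sub_eq_two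
    (hRNP : ∀ (f : X →L[ℝ] ℝ) (α : ℝ), ‖f‖ = 1 → 0 < α →
      ∃ y ∈ ballSlice f α, IsDentingPoint y)
    {x : X} (hx : ‖x‖ = 1) (h : ∀ y : X, IsDentingPoint y → y ≠ x → ‖x - y‖ = 2) :
    IsNablaPoint x := by
  refine ⟨hx, fun f α hf hα hxS ε hε => ?_⟩
  obtain ⟨y, hyS, hy⟩ := hRNP f α hf hα
  have hyx : y ≠ x := fun e => hxS (e ▸ hyS)
  exact ⟨y, hyS, by linarith [h y hy hyx]⟩

theorem isNablaPoint_iff_dist_denting_eq_two_of_RNP_general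
    {X : Type*} [NormedAddCommGroup X] [NormedSpace ℝ X]
    (hRNP : ∀ (f : X →L[ℝ] ℝ) (α : ℝ), ‖f‖ = 1 → 0 < α →
      ∃ y ∈ ballSlice f α, IsDentingPoint y)
    {x : X} (hx : ‖x‖ = 1) :
    IsNablaPoint x ↔ ∀ y : X, IsDentingPoint y → y ≠ x → ‖x - y‖ = 2 :=
  ⟨fun hN _ hy hyx => hN.norm_sub_eq_two hy hyx, isNablaPoint_of_norm_sub_eq_two hRNP hx⟩

/-- In a Banach space with the Radon–Nikodým property (via the geometric characterization:
every slice of the unit ball contains a denting point), a point `x ∈ S_X` is a `∇`-point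
if and only if `‖x - y‖ = 2` for every denting point `y` of `B_X` with `y ≠ x`. -/
theorem isNablaPoint_iff_dist_denting_eq_two_of_RNP
    {X : Type*} [NormedAddCommGroup X] [NormedSpace ℝ X] [CompleteSpace X]
    (hRNP : ∀ (f : X →L[ℝ] ℝ) (α : ℝ), ‖f‖ = 1 → 0 < α →
      ∃ y ∈ ballSlice f α, IsDentingPoint y)
    {x : X} (hx : ‖x‖ = 1) :
    IsNablaPoint x ↔ ∀ y : X, IsDentingPoint y → y ≠ x → ‖x - y‖ = 2 :=
  isNablaPoint_iff_dist_denting_eq_two_of_RNP_general hRNP hx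
end

section
/- Let X and Y be Banach spaces. If x ∈ S_X is a super Δ-point, then x ⊗ y is a super Δ-point in X ⊗̂_π Y for every y ∈ S_Y. -/
open scoped ENNReal

variable {X : Type*} [NormedAddCommGroup X] [NormedSpace ℝ X]

/-- `m : X →L[ℝ] Y →L[ℝ] Z` realizes `Z` as the projective tensor product `X ⊗̂_π Y`:
the closed unit ball of `Z` is the closed convex hull of the elementary tensors of the unit
balls, and every bounded bilinear form on `X × Y` lifts to a functional on `Z` of the same
norm. -/
structure IsProjTensorProduct
    {X Y Z : Type*} [NormedAddCommGroup X] [NormedSpace ℝ X]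
    [NormedAddCommGroup Y] [NormedSpace ℝ Y]
    [NormedAddCommGroup Z] [NormedSpace ℝ Z]
    (m : X →L[ℝ] Y →L[ℝ] Z) : Prop where
  ball_eq : Metric.closedBall (0 : Z) 1 =
    closure (convexHull ℝ {z : Z | ∃ x y, ‖x‖ ≤ 1 ∧ ‖y‖ ≤ 1 ∧ z = m x y})
  lift : ∀ B : X →L[ℝ] Y →L[ℝ] ℝ, ∃ g : Z →L[ℝ] ℝ, ‖g‖ = ‖B‖ ∧ ∀ x y, g (m x y) = B x y

/-- `x` is a super `Δ`-point: for every relatively weakly open subset `V` of `B_X`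
containing `x`, `sup_{y ∈ V} ‖x - y‖ = 2`. -/
def IsSuperDeltaPoint {X : Type*} [NormedAddCommGroup X] [NormedSpace ℝ X] (x : X) : Prop :=
  ‖x‖ = 1 ∧ ∀ U : Set (WeakSpace ℝ X), IsOpen U → toWeakSpace ℝ X x ∈ U →
    ∀ ε > (0 : ℝ), ∃ y : X, ‖y‖ ≤ 1 ∧ toWeakSpace ℝ X y ∈ U ∧ 2 - ε < ‖x - y‖

/-
For `‖y‖ = 1` the map `u ↦ u ⊗ y` is a linear isometry of `X` into `Z`, because
`‖m u v‖ = ‖u‖ ‖v‖` in a projective tensor product: the upper bound comes from the unit ball, the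
lower bound from lifting the bilinear form `f ⊗ g` built from norming functionals. Linear
isometries preserve super `Δ`-points, since they are weak-to-weak continuous.
-/

theorem IsSuperDeltaPoint.map_linearIsometry {X Z : Type*}
    [NormedAddCommGroup X] [NormedSpace ℝ X] [NormedAddCommGroup Z] [NormedSpace ℝ Z]
    {x : X} (hx : IsSuperDeltaPoint x) (T : X →ₗᵢ[ℝ] Z) : IsSuperDeltaPoint (T x) := by
  refine ⟨by rw [T.norm_map, hx.1], fun U hU hxU ε hε => ?_⟩
  let T' := WeakSpace.map T.toContinuousLinearMap
  obtain ⟨u, hu, huU, hxu⟩ := hx.2 (T' ⁻¹' U) (hU.preimage T'.continuous) hxU ε hε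
  exact ⟨T u, by rwa [T.norm_map], huU, by rwa [← map_sub, T.norm_map]⟩

namespace IsProjTensorProduct

variable {X Y Z : Type*} [NormedAddCommGroup X] [NormedSpace ℝ X]
    [NormedAddCommGroup Y] [NormedSpace ℝ Y] [NormedAddCommGroup Z] [NormedSpace ℝ Z]
    {m : X →L[ℝ] Y →L[ℝ] Z}

theorem opNorm_le_one (hm : IsProjTensorProduct m) : ‖m‖ ≤ 1 := by
  have hball : ∀ u v, ‖u‖ ≤ 1 → ‖v‖ ≤ 1 → ‖m u v‖ ≤ 1 := fun u v hu hv => by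
    have : m u v ∈ Metric.closedBall (0 : Z) 1 := by
      rw [hm.ball_eq]
      exact subset_closure (subset_convexHull ℝ _ ⟨u, v, hu, hv, rfl⟩)
    simpa using this
  refine ContinuousLinearMap.opNorm_le_of_unit_norm zero_le_one fun u hu => ?_
  exact ContinuousLinearMap.opNorm_le_of_unit_norm zero_le_one fun v hv =>
    hball u v hu.le hv.le

theorem norm_apply_le (hm : IsProjTensorProduct m) (u : X) (v : Y) :
    ‖m u v‖ ≤ ‖u‖ * ‖v‖ :=
  calc ‖m u v‖ ≤ ‖m‖ * ‖u‖ * ‖v‖ := m.le_opNorm₂ u v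
    _ ≤ 1 * ‖u‖ * ‖v‖ := by gcongr; exact hm.opNorm_le_one
    _ = ‖u‖ * ‖v‖ := by rw [one_mul]

theorem le_norm_apply (hm : IsProjTensorProduct m) (u : X) (v : Y) :
    ‖u‖ * ‖v‖ ≤ ‖m u v‖ := by
  rcases eq_or_ne u 0 with rfl | hu
  · simp
  rcases eq_or_ne v 0 with rfl | hv
  · simp
  obtain ⟨f, hf, hfu⟩ := exists_dual_vector ℝ u (norm_ne_zero_iff.mpr hu)
  obtain ⟨g, hg, hgv⟩ := exists_dual_vector ℝ v (norm_ne_zero_iff.mpr hv)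
  obtain ⟨h, hh, hhm⟩ := hm.lift (f.smulRight g)
  have hh1 : ‖h‖ = 1 := by rw [hh, ContinuousLinearMap.norm_smulRight_apply, hf, hg, one_mul]
  calc ‖u‖ * ‖v‖ = h (m u v) := by simp [hhm, hfu, hgv]
    _ ≤ ‖h‖ * ‖m u v‖ := (le_abs_self _).trans (h.le_opNorm _)
    _ = ‖m u v‖ := by rw [hh1, one_mul]

theorem norm_apply (hm : IsProjTensorProduct m) (u : X) (v : Y) : ‖m u v‖ = ‖u‖ * ‖v‖ :=
  (hm.norm_apply_le u v).antisymm (hm.le_norm_apply u v)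

noncomputable def tmulRight (hm : IsProjTensorProduct m) {v : Y} (hv : ‖v‖ = 1) :
    X →ₗᵢ[ℝ] Z where
  toLinearMap := (m.flip v : X →L[ℝ] Z)
  norm_map' u := by simp [hm.norm_apply, hv]

end IsProjTensorProduct

theorem isSuperDeltaPoint_tmul_general
    {X Y Z : Type*} [NormedAddCommGroup X] [NormedSpace ℝ X]
    [NormedAddCommGroup Y] [NormedSpace ℝ Y]
    [NormedAddCommGroup Z] [NormedSpace ℝ Z]
    (m : X →L[ℝ] Y →L[ℝ] Z) (hm : IsProjTensorProduct m)
    {x : X} (hx : IsSuperDeltaPoint x) (y : Y) (hy : ‖y‖ = 1) :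
    IsSuperDeltaPoint (m x y) :=
  hx.map_linearIsometry (hm.tmulRight hy)

/-- If `x ∈ S_X` is a super `Δ`-point, then `x ⊗ y` is a super `Δ`-point in the projective
tensor product `X ⊗̂_π Y` for every `y ∈ S_Y`. -/
theorem isSuperDeltaPoint_tmul
    {X Y Z : Type*} [NormedAddCommGroup X] [NormedSpace ℝ X] [CompleteSpace X]
    [NormedAddCommGroup Y] [NormedSpace ℝ Y] [CompleteSpace Y]
    [NormedAddCommGroup Z] [NormedSpace ℝ Z] [CompleteSpace Z]
    (m : X →L[ℝ] Y →L[ℝ] Z) (hm : IsProjTensorProduct m)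
    {x : X} (hx : IsSuperDeltaPoint x) (y : Y) (hy : ‖y‖ = 1) :
    IsSuperDeltaPoint (m x y) :=
  isSuperDeltaPoint_tmul_general m hm hx y hy
end

section
/- Let X be a Banach space containing a complemented subspace Y, and suppose Y admits an equivalent norm with a Daugavet point. Then X admits an equivalent norm with a Daugavet point. -/
open scoped ENNReal

variable {X : Type*} [NormedAddCommGroup X] [NormedSpace ℝ X]

/-- A bundled real Banach space. -/
structure BanachSpaceBundle where
  carrier : Type
  [grp : NormedAddCommGroup carrier]
  [mod : NormedSpace ℝ carrier]
  [comp : CompleteSpace carrier]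

attribute [instance] BanachSpaceBundle.grp BanachSpaceBundle.mod BanachSpaceBundle.comp

/-!
Since `P ∘ j = id`, `X ≃ Y × ker P`. Transport the renorming of `Y` with the Daugavet point `w`
and give the product the `ℓ¹`-norm: `(w, 0)` is then a Daugavet point, because a functional on an
`ℓ¹`-sum has as norm the maximum of the norms of its two restrictions.
-/

open WithLp

lemma ContinuousLinearMap.exists_norm_le_one_lt_apply {E : Type*} [NormedAddCommGroup E]
    [NormedSpace ℝ E] (f : E →L[ℝ] ℝ) {r : ℝ} (hr : r < ‖f‖) :
    ∃ x : E, ‖x‖ ≤ 1 ∧ r < f x := by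
  obtain ⟨x, hx, hrx⟩ := f.exists_lt_apply_of_lt_opNorm hr
  rcases lt_abs.mp hrx with hpos | hneg
  · exact ⟨x, hx.le, hpos⟩
  · exact ⟨-x, by simpa using hx.le, by simpa using hneg⟩

namespace WithLp

variable (p : ℝ≥0∞) {W Z : Type*} [NormedAddCommGroup W] [NormedSpace ℝ W]
  [NormedAddCommGroup Z] [NormedSpace ℝ Z]

def inlL : W →L[ℝ] WithLp p (W × Z) :=
  (prodContinuousLinearEquiv p ℝ W Z).symm.toContinuousLinearMap.comp (.inl ℝ W Z)

def inrL : Z →L[ℝ] WithLp p (W × Z) :=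
  (prodContinuousLinearEquiv p ℝ W Z).symm.toContinuousLinearMap.comp (.inr ℝ W Z)

@[simp] lemma inlL_apply (u : W) : inlL p (Z := Z) u = toLp p (u, 0) := rfl

@[simp] lemma inrL_apply (z : Z) : inrL p (W := W) z = toLp p (0, z) := rfl

lemma inlL_fst_add_inrL_snd (x : WithLp p (W × Z)) : inlL p x.fst + inrL p x.snd = x := by
  rw [inlL_apply, inrL_apply, ← toLp_add, Prod.mk_add_mk, zero_add, add_zero]
  rfl

variable {p}

lemma opNorm_inlL_le [Fact (1 ≤ p)] : ‖inlL p (W := W) (Z := Z)‖ ≤ 1 :=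
  ContinuousLinearMap.opNorm_le_bound _ zero_le_one fun u => by simp

lemma opNorm_inrL_le [Fact (1 ≤ p)] : ‖inrL p (W := W) (Z := Z)‖ ≤ 1 :=
  ContinuousLinearMap.opNorm_le_bound _ zero_le_one fun z => by simp

lemma opNorm_eq_max_of_L1 {F : Type*} [NormedAddCommGroup F] [NormedSpace ℝ F]
    (f : WithLp 1 (W × Z) →L[ℝ] F) : ‖f‖ = max ‖f.comp (inlL 1)‖ ‖f.comp (inrL 1)‖ := by
  set g := f.comp (inlL 1 (Z := Z))
  set h := f.comp (inrL 1 (W := W))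
  refine le_antisymm (f.opNorm_le_bound (by positivity) fun x => ?_) (max_le ?_ ?_)
  · calc ‖f x‖ = ‖f (inlL 1 x.fst + inrL 1 x.snd)‖ := by rw [inlL_fst_add_inrL_snd]
      _ = ‖g x.fst + h x.snd‖ := by rw [map_add]; rfl
      _ ≤ ‖g‖ * ‖x.fst‖ + ‖h‖ * ‖x.snd‖ :=
          (norm_add_le _ _).trans (add_le_add (g.le_opNorm _) (h.le_opNorm _))
      _ ≤ max ‖g‖ ‖h‖ * ‖x.fst‖ + max ‖g‖ ‖h‖ * ‖x.snd‖ := by gcongr <;> simp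
      _ = max ‖g‖ ‖h‖ * ‖x‖ := by rw [prod_norm_eq_of_L1, mul_add]
  · exact (f.opNorm_comp_le _).trans (mul_le_of_le_one_right (norm_nonneg f) opNorm_inlL_le)
  · exact (f.opNorm_comp_le _).trans (mul_le_of_le_one_right (norm_nonneg f) opNorm_inrL_le)

end WithLp

variable {W Z : Type*} [NormedAddCommGroup W] [NormedSpace ℝ W]
  [NormedAddCommGroup Z] [NormedSpace ℝ Z]

/-- A norm-one functional on `W ⊕₁ Z` either has norm one on `W`, and the Daugavet property
of `w` in `W` applies, or almost attains its norm on the unit ball of `Z`, which lies at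
distance close to `2` from `(w, 0)`. -/
theorem IsDaugavetPoint.toLp_inl {w : W} (hw : IsDaugavetPoint w) :
    IsDaugavetPoint (toLp 1 (w, (0 : Z))) := by
  refine ⟨by simpa using hw.1, fun f α hf hα ε hε => ?_⟩
  set g := f.comp (inlL 1 (Z := Z))
  set h := f.comp (inrL 1 (W := W))
  have hmax : max ‖g‖ ‖h‖ = 1 := (opNorm_eq_max_of_L1 f).symm.trans hf
  by_cases hh : ‖h‖ < 1
  · have hg : ‖g‖ = 1 := ((max_eq_iff.mp hmax).resolve_right fun h' => hh.ne h'.1).1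
    obtain ⟨u, hu, hwu⟩ := hw.2 g α hg hα ε hε
    refine ⟨toLp 1 (u, 0), ⟨by simpa using hu.1, hu.2⟩, ?_⟩
    rwa [← toLp_sub, Prod.mk_sub_mk, sub_zero, norm_toLp_fst]
  · set δ := min α ε
    obtain ⟨z, hz, hhz⟩ :=
      h.exists_norm_le_one_lt_apply (r := 1 - δ) (by push Not at hh; linarith [lt_min hα hε])
    have hhz_le : h z ≤ ‖z‖ := by
      calc h z ≤ ‖h z‖ := Real.le_norm_self _
        _ ≤ ‖h‖ * ‖z‖ := h.le_opNorm z
        _ ≤ 1 * ‖z‖ := by gcongr; exact hmax ▸ le_max_right _ _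
        _ = ‖z‖ := one_mul _
    refine ⟨toLp 1 (0, z), ⟨by simpa using hz, ?_⟩, ?_⟩
    · exact (sub_le_sub_left (min_le_left α ε) 1).trans_lt hhz
    · have hdist : ‖toLp 1 (w, (0 : Z)) - toLp 1 (0, z)‖ = 1 + ‖z‖ := by
        rw [← toLp_sub, prod_norm_eq_of_L1]
        simp [hw.1]
      linarith [min_le_right α ε]

theorem exists_renorming_with_daugavetPoint_of_complemented_general
    (X : Type) [NormedAddCommGroup X] [NormedSpace ℝ X] [CompleteSpace X]
    (Y : Type) [NormedAddCommGroup Y] [NormedSpace ℝ Y]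
    (j : Y →L[ℝ] X) (P : X →L[ℝ] Y) (hPj : ∀ v : Y, P (j v) = v)
    (hY : ∃ (W : BanachSpaceBundle) (_ : Y ≃L[ℝ] W.carrier) (w : W.carrier),
      IsDaugavetPoint w) :
    ∃ (W : BanachSpaceBundle) (_ : X ≃L[ℝ] W.carrier) (w : W.carrier),
      IsDaugavetPoint w := by
  obtain ⟨W, e, w, hw⟩ := hY
  have : CompleteSpace P.ker := P.isClosed_ker.completeSpace_coe
  let eX : X ≃L[ℝ] WithLp 1 (W.carrier × P.ker) :=
    (ContinuousLinearEquiv.equivOfRightInverse P j hPj).trans <|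
      (e.prodCongr (.refl ℝ P.ker)).trans (WithLp.prodContinuousLinearEquiv 1 ℝ _ _).symm
  exact ⟨⟨WithLp 1 (W.carrier × P.ker)⟩, eX, _, hw.toLp_inl⟩

/-- If `X` contains a complemented subspace `Y` (witnessed by maps `j : Y → X` and
`P : X → Y` with `P ∘ j = id`), and `Y` admits an equivalent norm with a Daugavet point,
then `X` admits an equivalent norm with a Daugavet point. -/
theorem exists_renorming_with_daugavetPoint_of_complemented
    (X : Type) [NormedAddCommGroup X] [NormedSpace ℝ X] [CompleteSpace X]
    (Y : Type) [NormedAddCommGroup Y] [NormedSpace ℝ Y] [CompleteSpace Y]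
    (j : Y →L[ℝ] X) (P : X →L[ℝ] Y) (hPj : ∀ v : Y, P (j v) = v)
    (hY : ∃ (W : BanachSpaceBundle) (_ : Y ≃L[ℝ] W.carrier) (w : W.carrier),
      IsDaugavetPoint w) :
    ∃ (W : BanachSpaceBundle) (_ : X ≃L[ℝ] W.carrier) (w : W.carrier),
      IsDaugavetPoint w :=
  exists_renorming_with_daugavetPoint_of_complemented_general X Y j P hPj hY
end
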